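/- Let H ≥ 1 and let α_t = (H+1)/(H+t), α_t^i = α_i ∏_{j=i+1}^t (1−α_j). Suppose a nonnegative double sequence (e_h^t) for h ∈ {1,…,H+1}, t ≥ 1 satisfies e_{H+1}^t = 0 and e_h^t ≤ ∑_{i=1}^t α_t^i e_{h+1}^i + B/√t for all h ≤ H and t ≥ 1, where B ≥ 0 is a constant. Then e_h^t ≤ B(1+H−h)(1+1/H)^{H−h}/√t for all h, t; in particular e_1^t ≤ eBH/√t. -/

import Mathlib

/-- Learning rate `α_t = (H+1)/(H+t)`. -/
noncomputable def lr (H t : ℕ) : ℝ := (H + 1) / (H + t)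

/-- Weight `α_t^i = α_i ∏_{j=i+1}^t (1 - α_j)`. -/
noncomputable def lrW (H t i : ℕ) : ℝ :=
  lr H i * ∏ j ∈ Finset.Icc (i + 1) t, (1 - lr H j)

/-!
Write `c = 1 + 1/H`. The weights obey `α_{t+1}^i = (1 - α_{t+1}) α_t^i` for `i ≤ t` and
`α_{t+1}^{t+1} = α_{t+1}`, so `∑_i α_t^i / √i ≤ c / √t` follows by induction on `t`; the inductive
step reduces, using `c H = H + 1`, to `√t ≤ √(t+1)`. Hence one application of the recursion turns
a bound `M / √i` on level `h + 1` into the bound `(c M + B) / √t` on level `h`, and backward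
induction from `e_{H+1} = 0` gives `e_h^t ≤ B (1+H-h) c^(H-h) / √t`. Finally `c^(H-1) ≤ c^H ≤ e`.
-/

open Finset Real

lemma lr_le_one (H : ℕ) {t : ℕ} (ht : 1 ≤ t) : lr H t ≤ 1 := by
  have : (1 : ℝ) ≤ t := by exact_mod_cast ht
  rw [lr, div_le_one (by positivity)]
  linarith

lemma lrW_nonneg (H t i : ℕ) : 0 ≤ lrW H t i := by
  refine mul_nonneg (by unfold lr; positivity) (prod_nonneg fun j hj => ?_)
  have := lr_le_one H (t := j) (by simp only [mem_Icc] at hj; omega)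
  linarith

lemma lrW_self (H t : ℕ) : lrW H t t = lr H t := by
  rw [lrW, Icc_eq_empty (by omega), prod_empty, mul_one]

lemma lrW_succ_of_le (H : ℕ) {t i : ℕ} (h : i ≤ t) :
    lrW H (t + 1) i = lrW H t i * (1 - lr H (t + 1)) := by
  rw [lrW, lrW, prod_Icc_succ_top (by omega), mul_assoc]

lemma sum_lrW_succ (H : ℕ) (f : ℕ → ℝ) (t : ℕ) :
    ∑ i ∈ Icc 1 (t + 1), lrW H (t + 1) i * f i =
      (1 - lr H (t + 1)) * ∑ i ∈ Icc 1 t, lrW H t i * f i + lr H (t + 1) * f (t + 1) := by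
  rw [sum_Icc_succ_top (by omega), lrW_self, mul_sum]
  congr 1
  refine sum_congr rfl fun i hi => ?_
  rw [lrW_succ_of_le H (mem_Icc.1 hi).2]
  ring

lemma one_sub_lr_mul_add_lr_div_sqrt_le {H : ℕ} (hH : 1 ≤ H) (t : ℕ) :
    (1 - lr H (t + 1)) * ((1 + 1 / (H : ℝ)) / √t) + lr H (t + 1) / √((t : ℝ) + 1)
      ≤ (1 + 1 / (H : ℝ)) / √((t : ℝ) + 1) := by
  have hH0 : (H : ℝ) ≠ 0 := by positivity
  have hD : (H : ℝ) + t + 1 ≠ 0 := by positivity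
  have hlr : lr H (t + 1) = (H + 1) / (H + t + 1) := by rw [lr]; push_cast; ring
  have hlr' : 1 - lr H (t + 1) = t / (H + t + 1) := by rw [hlr]; field_simp; ring
  have hc : (1 + 1 / (H : ℝ)) * (H + t + 1) = (1 + 1 / (H : ℝ)) * (t + 1) + (H + 1) := by
    field_simp; ring
  calc (1 - lr H (t + 1)) * ((1 + 1 / (H : ℝ)) / √t) + lr H (t + 1) / √((t : ℝ) + 1)
      = ((1 + 1 / (H : ℝ)) * (t / √t) + (H + 1) / √((t : ℝ) + 1)) / (H + t + 1) := by
        rw [hlr', hlr]; ring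
    _ ≤ ((1 + 1 / (H : ℝ)) * ((t + 1) / √((t : ℝ) + 1)) + (H + 1) / √((t : ℝ) + 1))
          / (H + t + 1) := by
        rw [div_sqrt, div_sqrt]
        gcongr
        linarith
    _ = (1 + 1 / (H : ℝ)) / √((t : ℝ) + 1) := by
        rw [div_eq_iff hD, div_mul_eq_mul_div, hc]
        ring

-- At `t = 0` both sides are `0` (as `x / √0 = 0`), so the induction can start there.
lemma sum_lrW_div_sqrt_le {H : ℕ} (hH : 1 ≤ H) (t : ℕ) :
    ∑ i ∈ Icc 1 t, lrW H t i / √i ≤ (1 + 1 / (H : ℝ)) / √t := by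
  simp only [div_eq_mul_inv (lrW H _ _)]
  induction t with
  | zero => simp
  | succ t ih =>
    have hα : 0 ≤ 1 - lr H (t + 1) := sub_nonneg.2 (lr_le_one H (by omega))
    rw [sum_lrW_succ, ← div_eq_mul_inv]
    push_cast
    calc (1 - lr H (t + 1)) * ∑ i ∈ Icc 1 t, lrW H t i * (√i)⁻¹ + lr H (t + 1) / √((t : ℝ) + 1)
        ≤ (1 - lr H (t + 1)) * ((1 + 1 / (H : ℝ)) / √t) + lr H (t + 1) / √((t : ℝ) + 1) := by
          gcongr
      _ ≤ (1 + 1 / (H : ℝ)) / √((t : ℝ) + 1) := one_sub_lr_mul_add_lr_div_sqrt_le hH t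

lemma sum_lrW_mul_le {H : ℕ} (hH : 1 ≤ H) {f : ℕ → ℝ} {M : ℝ} (hM : 0 ≤ M)
    (hf : ∀ i, 1 ≤ i → f i ≤ M / √i) (t : ℕ) :
    ∑ i ∈ Icc 1 t, lrW H t i * f i ≤ M * (1 + 1 / (H : ℝ)) / √t :=
  calc ∑ i ∈ Icc 1 t, lrW H t i * f i
      ≤ ∑ i ∈ Icc 1 t, lrW H t i * (M / √i) :=
        sum_le_sum fun i hi => mul_le_mul_of_nonneg_left (hf i (mem_Icc.1 hi).1) (lrW_nonneg H t i)
    _ = M * ∑ i ∈ Icc 1 t, lrW H t i / √i := by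
        rw [mul_sum]; exact sum_congr rfl fun i _ => by ring
    _ ≤ M * (1 + 1 / (H : ℝ)) / √t := by
        rw [mul_div_assoc]; exact mul_le_mul_of_nonneg_left (sum_lrW_div_sqrt_le hH t) hM

lemma mul_natCast_mul_pow_pred_mul_add_le {B c : ℝ} (hB : 0 ≤ B) (hc : 1 ≤ c) (k : ℕ) :
    B * k * c ^ (k - 1) * c + B ≤ B * (k + 1) * c ^ k := by
  rcases k with _ | k
  · simp
  · have : B ≤ B * c ^ (k + 1) := le_mul_of_one_le_right hB (one_le_pow₀ hc)
    rw [Nat.add_sub_cancel, mul_assoc _ (c ^ k), ← pow_succ]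
    push_cast
    linarith

lemma le_of_lrW_recursion {H : ℕ} (hH : 1 ≤ H) {B : ℝ} (hB : 0 ≤ B) {e : ℕ → ℕ → ℝ}
    (hend : ∀ t, 1 ≤ t → e (H + 1) t = 0)
    (hrec : ∀ h t, 1 ≤ h → h ≤ H → 1 ≤ t →
      e h t ≤ ∑ i ∈ Icc 1 t, lrW H t i * e (h + 1) i + B / √t)
    {h : ℕ} (h1 : 1 ≤ h) (hh : h ≤ H + 1) (t : ℕ) (ht : 1 ≤ t) :
    e h t ≤ B * (1 + (H : ℝ) - h) * (1 + 1 / (H : ℝ)) ^ (H - h) / √t := by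
  have hc : 1 ≤ 1 + 1 / (H : ℝ) := le_add_of_nonneg_right (by positivity)
  induction hh using Nat.decreasingInduction generalizing t with
  | self => simp [hend t ht, add_comm]
  | of_succ h hlt ih =>
    have hk : (1 + (H : ℝ) - ((h + 1 : ℕ) : ℝ)) = ((H - h : ℕ) : ℝ) := by
      rw [Nat.cast_sub (by omega)]; push_cast; ring
    have hk' : 1 + (H : ℝ) - h = ((H - h : ℕ) : ℝ) + 1 := by
      rw [Nat.cast_sub (by omega)]; ring
    have ih' : ∀ i, 1 ≤ i → e (h + 1) i ≤
        B * (H - h : ℕ) * (1 + 1 / (H : ℝ)) ^ (H - h - 1) / √i := by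
      simpa only [hk, Nat.sub_sub] using fun i hi => ih (by omega) i hi
    calc e h t ≤ ∑ i ∈ Icc 1 t, lrW H t i * e (h + 1) i + B / √t := hrec h t h1 (by omega) ht
      _ ≤ B * (H - h : ℕ) * (1 + 1 / (H : ℝ)) ^ (H - h - 1) * (1 + 1 / (H : ℝ)) / √t
            + B / √t := by
        gcongr
        exact sum_lrW_mul_le hH (by positivity) ih' t
      _ ≤ B * (1 + (H : ℝ) - h) * (1 + 1 / (H : ℝ)) ^ (H - h) / √t := by
        rw [← add_div, hk']
        gcongr
        exact mul_natCast_mul_pow_pred_mul_add_le hB hc _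

theorem stmt17_general (H : ℕ) (hH : 1 ≤ H) (B : ℝ) (hB : 0 ≤ B)
    (e : ℕ → ℕ → ℝ)
    (hend : ∀ t, 1 ≤ t → e (H + 1) t = 0)
    (hrec : ∀ h t, 1 ≤ h → h ≤ H → 1 ≤ t →
      e h t ≤ ∑ i ∈ Finset.Icc 1 t, lrW H t i * e (h + 1) i + B / Real.sqrt t) :
    (∀ h t, 1 ≤ h → h ≤ H → 1 ≤ t →
      e h t ≤ B * (1 + (H : ℝ) - h) * (1 + 1 / (H : ℝ)) ^ (H - h) / Real.sqrt t) ∧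
    (∀ t, 1 ≤ t → e 1 t ≤ Real.exp 1 * B * H / Real.sqrt t) := by
  have hbound := fun h t (h1 : 1 ≤ h) hh ht => le_of_lrW_recursion hH hB hend hrec h1 hh t ht
  refine ⟨fun h t h1 hh ht => hbound h t h1 (by omega) ht, fun t ht => ?_⟩
  have hpow : (1 + 1 / (H : ℝ)) ^ (H - 1) ≤ exp 1 :=
    calc (1 + 1 / (H : ℝ)) ^ (H - 1) ≤ (1 + 1 / (H : ℝ)) ^ H :=
          pow_le_pow_right₀ (le_add_of_nonneg_right (by positivity)) (Nat.sub_le H 1)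
      _ ≤ exp 1 := by rw [one_div]; exact one_add_inv_pow_le_exp
  calc e 1 t ≤ B * (1 + (H : ℝ) - 1) * (1 + 1 / (H : ℝ)) ^ (H - 1) / √t :=
        by simpa only [Nat.cast_one] using hbound 1 t le_rfl (by omega) ht
    _ ≤ exp 1 * B * H / √t := by
        rw [add_sub_cancel_left, mul_right_comm, mul_comm (exp 1)]
        gcongr

theorem stmt17 (H : ℕ) (hH : 1 ≤ H) (B : ℝ) (hB : 0 ≤ B)
    (e : ℕ → ℕ → ℝ)
    (hnn : ∀ h t, 0 ≤ e h t)
    (hend : ∀ t, 1 ≤ t → e (H + 1) t = 0)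
    (hrec : ∀ h t, 1 ≤ h → h ≤ H → 1 ≤ t →
      e h t ≤ ∑ i ∈ Finset.Icc 1 t, lrW H t i * e (h + 1) i + B / Real.sqrt t) :
    (∀ h t, 1 ≤ h → h ≤ H → 1 ≤ t →
      e h t ≤ B * (1 + (H : ℝ) - h) * (1 + 1 / (H : ℝ)) ^ (H - h) / Real.sqrt t) ∧
    (∀ t, 1 ≤ t → e 1 t ≤ Real.exp 1 * B * H / Real.sqrt t) :=
  stmt17_general H hH B hB e hend hrec
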